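/- Let ν be a Gibbs measure on Θ and let w ∈ Θ be a periodic point, τ^p(w) = w for some p ≥ 1. Then both limits L_u = lim_{n→∞} ν({v ∈ Θ : v_i = w_i for 0 ≤ i ≤ (n+1)p}) / ν({v ∈ Θ : v_i = w_i for 0 ≤ i ≤ np}) and L_s = lim_{n→∞} ν({v ∈ Θ : v_{−i} = w_{−i} for 0 ≤ i ≤ (n+1)p}) / ν({v ∈ Θ : v_{−i} = w_{−i} for 0 ≤ i ≤ np}) exist, and L_u = L_s. (At periodic orbits the stable and unstable measure ratios of a Gibbs measure coincide.) -/

import Mathlib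

/-!
Shift invariance and periodicity of `w` give the backward cylinder `w_{[-M,0]}` the same measure
as the forward cylinder `w_{[0,M]}` whenever `p ∣ M`, so the two sequences of ratios agree term by
term. For the backward ratios, invariance identifies the stable ratio of the past `… w_i w_{i+1}`
at length `np + i + 1` with `ν(w_{[-np,i+1]}) / ν(w_{[-np,i]})`. Over one period these factors
telescope to `ν(w_{[-np,p]}) / ν(w_{[-np,0]}) = ν(w_{[-(n+1)p,0]}) / ν(w_{[-np,0]})`, which therefore
converges to the product of the stable scaling function along the orbit.
-/

open MeasureTheory Filter Topology

namespace PaperSFT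

/-- The two-sided subshift of finite type determined by the transition function `A`. -/
abbrev Theta {k : ℕ} (A : Fin k → Fin k → Bool) : Type :=
  {w : ℤ → Fin k // ∀ i : ℤ, A (w i) (w (i + 1)) = true}

/-- The one-sided (unstable) subshift of right-infinite admissible words. -/
abbrev ThetaU {k : ℕ} (A : Fin k → Fin k → Bool) : Type :=
  {w : ℕ → Fin k // ∀ i : ℕ, A (w i) (w (i + 1)) = true}

/-- The one-sided (stable) subshift of left-infinite admissible words `… w₁ w₀`. -/
abbrev ThetaS {k : ℕ} (A : Fin k → Fin k → Bool) : Type :=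
  {w : ℕ → Fin k // ∀ i : ℕ, A (w (i + 1)) (w i) = true}

/-- The transition matrix of `A`. -/
def tmat {k : ℕ} (A : Fin k → Fin k → Bool) : Matrix (Fin k) (Fin k) ℕ :=
  fun i j => if A i j then 1 else 0

/-- Some power `N ≥ 1` of the transition matrix has all entries positive. -/
def Mixing {k : ℕ} (A : Fin k → Fin k → Bool) : Prop :=
  ∃ N : ℕ, 1 ≤ N ∧ ∀ i j : Fin k, 0 < (tmat A ^ N) i j

/-- The two-sided shift map `τ`. -/
def shift {k : ℕ} (A : Fin k → Fin k → Bool) : Theta A → Theta A :=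
  fun w => ⟨fun i => w.1 (i + 1), fun i => w.2 (i + 1)⟩

/-- The one-sided shift map `τ_u`. -/
def shiftU {k : ℕ} (A : Fin k → Fin k → Bool) : ThetaU A → ThetaU A :=
  fun w => ⟨fun i => w.1 (i + 1), fun i => w.2 (i + 1)⟩

/-- The cylinder `{v ∈ Θ : v_i = w_i for m ≤ i ≤ n}` (nonnegative coordinates). -/
def cylP {k : ℕ} (A : Fin k → Fin k → Bool) (w : ℕ → Fin k) (m n : ℕ) : Set (Theta A) :=
  {v : Theta A | ∀ i : ℕ, m ≤ i → i ≤ n → v.1 (i : ℤ) = w i}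

/-- The cylinder `{v ∈ Θ : v_{-i} = w_i for m ≤ i ≤ n}` (nonpositive coordinates). -/
def cylN {k : ℕ} (A : Fin k → Fin k → Bool) (w : ℕ → Fin k) (m n : ℕ) : Set (Theta A) :=
  {v : Theta A | ∀ i : ℕ, m ≤ i → i ≤ n → v.1 (-(i : ℤ)) = w i}

/-- The ratio `ν(E)/ν(F)` of the measures of two sets, as a real number. -/
noncomputable def mratio {k : ℕ} {A : Fin k → Fin k → Bool}
    (ν : Measure (Theta A)) (E F : Set (Theta A)) : ℝ :=
  (ν E).toReal / (ν F).toReal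

/-- Hölder continuity of a function on a one-sided sequence space, with respect to the
metric `d(w,w') = 2^{-n}` where `n` is the largest integer with `w_i = w'_i` for `i ≤ n`. -/
def HolderOnSeq {k : ℕ} {P : (ℕ → Fin k) → Prop} (φ : {w : ℕ → Fin k // P w} → ℝ) : Prop :=
  ∃ c : ℝ, 0 < c ∧ ∃ β : ℝ, 0 < β ∧ ∀ w w' : {w : ℕ → Fin k // P w}, ∀ n : ℕ,
    (∀ i ≤ n, w.1 i = w'.1 i) → |φ w - φ w'| ≤ c * (2 : ℝ) ^ (-(n : ℝ) * β)

/-- `ν` is invariant under the two-sided shift. -/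
def Invariant {k : ℕ} (A : Fin k → Fin k → Bool) (ν : Measure (Theta A)) : Prop :=
  ∀ S : Set (Theta A), MeasurableSet S → ν (shift A ⁻¹' S) = ν S

/-- `ν` gives positive measure to every cylinder. -/
def PosOnCyl {k : ℕ} (A : Fin k → Fin k → Bool) (ν : Measure (Theta A)) : Prop :=
  ∀ (w : Theta A) (a b : ℤ),
    0 < ν {v : Theta A | ∀ i : ℤ, a ≤ i → i ≤ b → v.1 i = w.1 i}

/-- The ratios `ν(Θ_{w₀…w_n}) / ν(Θ_{w₁…w_n})` converge to `L` (as `n → ∞`). -/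
def URatioLim {k : ℕ} (A : Fin k → Fin k → Bool) (ν : Measure (Theta A))
    (w : ThetaU A) (L : ℝ) : Prop :=
  Tendsto (fun n : ℕ =>
      mratio ν (cylP A w.1 0 (n + 1)) (cylP A (fun i => w.1 (i + 1)) 0 n))
    atTop (𝓝 L)

/-- The ratios `ν({v : v_{-i} = w_i, 0 ≤ i ≤ n}) / ν({v : v_{-i} = w_i, 1 ≤ i ≤ n})`
converge to `L`. -/
def SRatioLim {k : ℕ} (A : Fin k → Fin k → Bool) (ν : Measure (Theta A))
    (w : ThetaS A) (L : ℝ) : Prop :=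
  Tendsto (fun n : ℕ => mratio ν (cylN A w.1 0 n) (cylN A w.1 1 n)) atTop (𝓝 L)

/-- A Gibbs measure: a shift-invariant Borel probability measure which is positive on
cylinders and whose one-sided measure ratios converge to Hölder continuous scaling
functions on `Θ^u` and `Θ^s`. -/
def IsGibbs {k : ℕ} (A : Fin k → Fin k → Bool) (ν : Measure (Theta A)) : Prop :=
  IsProbabilityMeasure ν ∧ Invariant A ν ∧ PosOnCyl A ν ∧
  (∃ sU : ThetaU A → ℝ, HolderOnSeq sU ∧ ∀ w : ThetaU A, URatioLim A ν w (sU w)) ∧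
  (∃ sS : ThetaS A → ℝ, HolderOnSeq sS ∧ ∀ w : ThetaS A, SRatioLim A ν w (sS w))

/-- `c₀ … c_{n-1}` is an admissible word. -/
def AdmWord {k : ℕ} (A : Fin k → Fin k → Bool) (c : ℕ → Fin k) (n : ℕ) : Prop :=
  ∀ i : ℕ, i + 1 < n → A (c i) (c (i + 1)) = true

/-- The set `E_m = {v ∈ Θ : v_{-i} = ξ_i for 0 ≤ i ≤ m and v_j = c_j for 0 ≤ j ≤ n-1}`. -/
def cylE {k : ℕ} (A : Fin k → Fin k → Bool) (ξ : ThetaS A) (c : ℕ → Fin k)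
    (n m : ℕ) : Set (Theta A) :=
  {v : Theta A | (∀ i : ℕ, i ≤ m → v.1 (-(i : ℤ)) = ξ.1 i) ∧
    (∀ j : ℕ, j < n → v.1 (j : ℤ) = c j)}

/-- `ρ_ξ(c₀…c_{n-1}) = r`, i.e. the ratios `ν(E_m)/ν(F_m)` converge to `r`. -/
def RhoLim {k : ℕ} (A : Fin k → Fin k → Bool) (ν : Measure (Theta A))
    (ξ : ThetaS A) (c : ℕ → Fin k) (n : ℕ) (r : ℝ) : Prop :=
  Tendsto (fun m : ℕ => mratio ν (cylE A ξ c n m) (cylN A ξ.1 0 m)) atTop (𝓝 r)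

/-- Prepending an admissible symbol `a` to a right-infinite word `ξ`; this enumerates the
preimages of `ξ` under the one-sided shift `τ_u`. -/
def consU {k : ℕ} (A : Fin k → Fin k → Bool) (a : Fin k) (ξ : ThetaU A)
    (h : A a (ξ.1 0) = true) : ThetaU A :=
  ⟨fun i => Nat.rec a (fun j _ => ξ.1 j) i, by
    intro i
    cases i with
    | zero => exact h
    | succ j => exact ξ.2 j⟩

end PaperSFT

theorem Finset.prod_range_div_of_ne_zero {G₀ : Type*} [CommGroupWithZero G₀]
    (f : ℕ → G₀) (hf : ∀ i, f i ≠ 0) (n : ℕ) :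
    ∏ i ∈ Finset.range n, f (i + 1) / f i = f n / f 0 := by
  induction n with
  | zero => simp [hf 0]
  | succ n ih => rw [Finset.prod_range_succ, ih, div_mul_div_cancel₀' (hf n)]

namespace PaperSFT

section

variable {k : ℕ} {A : Fin k → Fin k → Bool}

def cylZ (A : Fin k → Fin k → Bool) (u : ℤ → Fin k) (a b : ℤ) : Set (Theta A) :=
  {v : Theta A | ∀ i : ℤ, a ≤ i → i ≤ b → v.1 i = u i}

lemma measurable_coord (i : ℤ) : Measurable fun v : Theta A => v.1 i :=
  (measurable_pi_apply i).comp measurable_subtype_coe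

lemma measurableSet_cylZ (u : ℤ → Fin k) (a b : ℤ) : MeasurableSet (cylZ A u a b) := by
  have h : cylZ A u a b = ⋂ i ∈ Finset.Icc a b, (fun v : Theta A => v.1 i) ⁻¹' {u i} := by
    ext v; simp [cylZ, and_imp]
  rw [h]
  exact MeasurableSet.biInter (Finset.Icc a b).countable_toSet
    fun i _ => measurable_coord i (measurableSet_singleton _)

lemma measurable_shift : Measurable (shift A) :=
  Measurable.subtype_mk <| measurable_pi_lambda _ fun i => measurable_coord (i + 1)

lemma shift_iterate_apply (m : ℕ) (v : Theta A) (i : ℤ) :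
    ((shift A)^[m] v).1 i = v.1 (i + m) := by
  induction m generalizing i with
  | zero => simp
  | succ m ih =>
    rw [Function.iterate_succ_apply']
    simp only [shift, ih, Nat.cast_succ, add_comm (m : ℤ) 1, add_assoc]

lemma preimage_iterate_shift_cylZ (m : ℕ) (u : ℤ → Fin k) (a b : ℤ) :
    (shift A)^[m] ⁻¹' cylZ A u a b = cylZ A (fun i => u (i - m)) (a + m) (b + m) := by
  ext v
  simp only [Set.mem_preimage, cylZ, Set.mem_ofPred_eq, shift_iterate_apply]
  constructor
  · intro h i hai hib
    simpa using h (i - m) (by omega) (by omega)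
  · intro h i hai hib
    simpa using h (i + m) (by omega) (by omega)

lemma Invariant.measure_preimage_iterate {ν : Measure (Theta A)} (hinv : Invariant A ν)
    (m : ℕ) {S : Set (Theta A)} (hS : MeasurableSet S) :
    ν ((shift A)^[m] ⁻¹' S) = ν S := by
  induction m with
  | zero => rfl
  | succ m ih =>
    rw [Function.iterate_succ, Set.preimage_comp,
      hinv _ (measurable_shift.iterate m hS), ih]

lemma Invariant.measure_cylZ_translate {ν : Measure (Theta A)} (hinv : Invariant A ν)
    (m : ℕ) (u : ℤ → Fin k) (a b : ℤ) :
    ν (cylZ A (fun i => u (i - m)) (a + m) (b + m)) = ν (cylZ A u a b) := by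
  rw [← preimage_iterate_shift_cylZ, hinv.measure_preimage_iterate m (measurableSet_cylZ u a b)]

lemma Invariant.measure_cylZ_add_period {ν : Measure (Theta A)} (hinv : Invariant A ν)
    {u : ℤ → Fin k} {m : ℕ} (hu : Function.Periodic u m) (a b : ℤ) :
    ν (cylZ A u (a + m) (b + m)) = ν (cylZ A u a b) := by
  simpa only [hu.sub_eq] using hinv.measure_cylZ_translate m u a b

lemma periodic_of_iterate_shift_eq {w : Theta A} {p : ℕ} (hper : (shift A)^[p] w = w) :
    Function.Periodic w.1 p := fun i => by
  rw [← shift_iterate_apply, hper]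

lemma cylP_eq_cylZ (u : ℤ → Fin k) (m n : ℕ) :
    cylP A (fun i => u i) m n = cylZ A u m n := by
  ext v
  simp only [cylP, cylZ, Set.mem_ofPred_eq]
  constructor
  · intro h i hmi hin
    lift i to ℕ using by omega
    exact h i (by omega) (by omega)
  · intro h i hmi hin
    exact h i (by omega) (by omega)

lemma cylN_eq_cylZ (u : ℤ → Fin k) (m n : ℕ) :
    cylN A (fun i => u (-i)) m n = cylZ A u (-n) (-m) := by
  ext v
  simp only [cylN, cylZ, Set.mem_ofPred_eq]
  constructor
  · intro h i hni him
    obtain ⟨j, rfl⟩ : ∃ j : ℕ, i = -j := ⟨(-i).toNat, by omega⟩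
    exact h j (by omega) (by omega)
  · intro h i hmi hin
    exact h (-i) (by omega) (by omega)

def pastWord (w : Theta A) (j : ℤ) : ThetaS A :=
  ⟨fun i => w.1 (j - i), fun i => by
    simpa [sub_add_eq_sub_sub, sub_add_cancel] using w.2 (j - i - 1)⟩

lemma Invariant.measure_cylN_pastWord {ν : Measure (Theta A)} (hinv : Invariant A ν)
    (w : Theta A) (j m n : ℕ) :
    ν (cylN A (pastWord w j).1 m n) = ν (cylZ A w.1 (j - n) (j - m)) := by
  have hword : (pastWord w j).1 = fun i : ℕ => (fun l => w.1 (l + j)) (-i) := by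
    funext i; simp [pastWord, neg_add_eq_sub]
  rw [hword, cylN_eq_cylZ (A := A) (fun l => w.1 (l + j)), ← hinv.measure_cylZ_translate j]
  simp [neg_add_eq_sub]

lemma tendsto_mratio_cylZ_period {ν : Measure (Theta A)} [IsFiniteMeasure ν]
    (hinv : Invariant A ν) (hpos : PosOnCyl A ν) {s : ThetaS A → ℝ}
    (hs : ∀ ξ : ThetaS A, SRatioLim A ν ξ (s ξ)) {w : Theta A} {p : ℕ} (hp : 1 ≤ p)
    (hw : Function.Periodic w.1 p) :
    Tendsto (fun n : ℕ => mratio ν (cylZ A w.1 (-((n + 1) * p : ℕ)) 0)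
        (cylZ A w.1 (-(n * p : ℕ)) 0))
      atTop (𝓝 (∏ i ∈ Finset.range p, s (pastWord w (i + 1 : ℕ)))) := by
  set H : ℕ → ℕ → ℝ := fun n i => (ν (cylZ A w.1 (-(n * p : ℕ)) i)).toReal with hH
  have hH_ne (n i : ℕ) : H n i ≠ 0 :=
    (ENNReal.toReal_pos (hpos w _ _).ne' (measure_ne_top ν _)).ne'
  have hlen (i : ℕ) : Tendsto (fun n : ℕ => n * p + i + 1) atTop atTop :=
    tendsto_atTop_mono (fun n => by rw [id]; nlinarith) tendsto_id
  have hfactor (i : ℕ) :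
      Tendsto (fun n => H n (i + 1) / H n i) atTop (𝓝 (s (pastWord w (i + 1 : ℕ)))) := by
    refine ((hs _).comp (hlen i)).congr fun n => ?_
    simp only [Function.comp_apply, mratio, hH]
    rw [hinv.measure_cylN_pastWord, hinv.measure_cylN_pastWord]
    congr 4 <;> push_cast <;> ring
  have hperiod (n : ℕ) :
      ν (cylZ A w.1 (-(n * p : ℕ)) p) = ν (cylZ A w.1 (-((n + 1) * p : ℕ)) 0) := by
    rw [← hinv.measure_cylZ_add_period hw (-((n + 1) * p : ℕ)) 0]
    congr 2 <;> push_cast <;> ring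
  refine (tendsto_finsetProd _ fun i _ => hfactor i).congr fun n => ?_
  rw [Finset.prod_range_div_of_ne_zero (H n) (hH_ne n), mratio, hH]
  simp only [hperiod, Nat.cast_zero]

end

theorem gibbs_periodic_ratio_limits_coincide_general
    (k : ℕ) (A : Fin k → Fin k → Bool)
    (ν : Measure (Theta A)) (hν : IsGibbs A ν)
    (w : Theta A) (p : ℕ) (hp : 1 ≤ p) (hper : (shift A)^[p] w = w) :
    ∃ L : ℝ,
      Tendsto (fun n : ℕ =>
          mratio ν (cylP A (fun i => w.1 (i : ℤ)) 0 ((n + 1) * p))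
            (cylP A (fun i => w.1 (i : ℤ)) 0 (n * p))) atTop (𝓝 L) ∧
      Tendsto (fun n : ℕ =>
          mratio ν (cylN A (fun i => w.1 (-(i : ℤ))) 0 ((n + 1) * p))
            (cylN A (fun i => w.1 (-(i : ℤ))) 0 (n * p))) atTop (𝓝 L) := by
  obtain ⟨_, hinv, hpos, -, s, -, hs⟩ := hν
  have hw := periodic_of_iterate_shift_eq hper
  have hstable := tendsto_mratio_cylZ_period hinv hpos hs hp hw
  have hflip (n : ℕ) : ν (cylZ A w.1 0 (n * p : ℕ)) = ν (cylZ A w.1 (-(n * p : ℕ)) 0) := by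
    have hwn : Function.Periodic w.1 (n * p : ℕ) := by simpa using hw.nat_mul n
    simpa using hinv.measure_cylZ_add_period hwn (-(n * p : ℕ)) 0
  refine ⟨_, hstable.congr fun n => ?_, hstable.congr fun n => ?_⟩
  · rw [cylP_eq_cylZ, cylP_eq_cylZ, mratio, mratio, Nat.cast_zero, hflip, hflip]
  · rw [cylN_eq_cylZ, cylN_eq_cylZ, Nat.cast_zero, neg_zero]

/-- **Stable and unstable measure ratios coincide at periodic orbits.**  For a Gibbs
measure `ν` and a periodic point `w` of period `p`, both limits
`L_u = lim ν({v : v_i = w_i, 0 ≤ i ≤ (n+1)p}) / ν({v : v_i = w_i, 0 ≤ i ≤ np})` and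
`L_s = lim ν({v : v_{-i} = w_{-i}, 0 ≤ i ≤ (n+1)p}) / ν({v : v_{-i} = w_{-i}, 0 ≤ i ≤ np})`
exist and are equal. -/
theorem gibbs_periodic_ratio_limits_coincide
    (k : ℕ) (hk : 1 ≤ k) (A : Fin k → Fin k → Bool) (hA : Mixing A)
    (ν : Measure (Theta A)) (hν : IsGibbs A ν)
    (w : Theta A) (p : ℕ) (hp : 1 ≤ p) (hper : (shift A)^[p] w = w) :
    ∃ L : ℝ,
      Tendsto (fun n : ℕ =>
          mratio ν (cylP A (fun i => w.1 (i : ℤ)) 0 ((n + 1) * p))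
            (cylP A (fun i => w.1 (i : ℤ)) 0 (n * p))) atTop (𝓝 L) ∧
      Tendsto (fun n : ℕ =>
          mratio ν (cylN A (fun i => w.1 (-(i : ℤ))) 0 ((n + 1) * p))
            (cylN A (fun i => w.1 (-(i : ℤ))) 0 (n * p))) atTop (𝓝 L) :=
  gibbs_periodic_ratio_limits_coincide_general k A ν hν w p hp hper

end PaperSFT
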